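/- Let Γ be a conjugation on ℂ^d, W a strict contraction on ℂ^d with ΓW* = WΓ, and U ∈ L(ℂ^d) unitary with ΓUΓ = U*. Set U' = -W + D_{W*}(I - UW*)^{-1}UD_W. Then for every x ∈ ℂ^d: U' Γ (D_{W*}(I - UW*)^{-1} x) = D_{W*}(I - UW*)^{-1} U Γ x. -/

import Mathlib

open scoped Matrix.Norms.L2Operator ComplexOrder
open Matrix

open scoped ComplexInnerProductSpace

variable {d : ℕ}

lemma tl_mul (M N : Matrix (Fin d) (Fin d) ℂ) (x : EuclideanSpace ℂ (Fin d)) :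
    toEuclideanLin (M * N) x = toEuclideanLin M (toEuclideanLin N x) := by
  simp [toEuclideanLin_apply, mulVec_mulVec]

lemma tl_one (x : EuclideanSpace ℂ (Fin d)) :
    toEuclideanLin (1 : Matrix (Fin d) (Fin d) ℂ) x = x := by
  simp [toEuclideanLin_apply]

lemma tl_sub (M N : Matrix (Fin d) (Fin d) ℂ) (x : EuclideanSpace ℂ (Fin d)) :
    toEuclideanLin (M - N) x = toEuclideanLin M x - toEuclideanLin N x := by
  rw [map_sub]; rfl

lemma conj_inner_key (Γ : EuclideanSpace ℂ (Fin d) →ₛₗ[starRingEnd ℂ] EuclideanSpace ℂ (Fin d))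
    (hiso : ∀ x, ‖Γ x‖ = ‖x‖) (a b : EuclideanSpace ℂ (Fin d)) :
    ⟪Γ a, Γ b⟫ = ⟪b, a⟫ := by
  have hI : (RCLike.I : ℂ) = Complex.I := rfl
  have h1 : Γ a + Γ b = Γ (a + b) := (map_add Γ a b).symm
  have h2 : Γ a - Γ b = Γ (a - b) := (map_sub Γ a b).symm
  have h3 : Γ a - (RCLike.I : ℂ) • Γ b = Γ (a + (RCLike.I : ℂ) • b) := by
    rw [map_add, map_smulₛₗ]
    simp [hI, Complex.conj_I, sub_eq_add_neg, neg_smul]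
  have h4 : Γ a + (RCLike.I : ℂ) • Γ b = Γ (a - (RCLike.I : ℂ) • b) := by
    rw [map_sub, map_smulₛₗ]
    simp [hI, Complex.conj_I, sub_eq_add_neg, neg_smul]
  rw [← inner_conj_symm b a, inner_eq_sum_norm_sq_div_four (Γ a) (Γ b),
    inner_eq_sum_norm_sq_div_four a b, h1, h2, h3, h4, hiso, hiso, hiso, hiso]
  simp only [map_div₀, map_add, map_sub, map_neg, _root_.map_mul, map_pow,
    Complex.conj_ofReal, RCLike.conj_ofReal, map_ofNat, hI, Complex.conj_I]
  ring

lemma sqrt_eig (T : EuclideanSpace ℂ (Fin d) →ₗ[ℂ] EuclideanSpace ℂ (Fin d))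
    (hsym : ∀ a b, ⟪T a, b⟫ = ⟪a, T b⟫)
    (hpos : ∀ a, (0 : ℂ) ≤ ⟪a, T a⟫)
    (μ : ℝ) (hμ : 0 ≤ μ) (v : EuclideanSpace ℂ (Fin d))
    (h2 : T (T v) = ((μ : ℂ) ^ 2) • v) :
    T v = (μ : ℂ) • v := by
  rcases hμ.eq_or_lt with h | h
  · -- μ = 0
    have hTT : T (T v) = 0 := by rw [h2, ← h]; simp
    have hz : ⟪T v, T v⟫ = 0 := by rw [hsym, hTT, inner_zero_right]
    rw [inner_self_eq_zero] at hz
    rw [hz, ← h]; simp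
  · set w := T v - (μ : ℂ) • v with hw
    have hTw : T w = (-(μ : ℂ)) • w := by
      rw [hw, map_sub, _root_.map_smul, h2]
      module
    have h0 : (0 : ℂ) ≤ ⟪w, T w⟫ := hpos w
    rw [hTw, inner_smul_right] at h0
    have him : (⟪w, w⟫ : ℂ).im = 0 := by simpa using inner_self_im (𝕜 := ℂ) w
    have hrec : (0 : ℝ) ≤ (⟪w, w⟫ : ℂ).re := by simpa using inner_self_nonneg (𝕜 := ℂ) (x := w)
    have h1 := (Complex.le_def.mp h0).1
    simp only [Complex.zero_re, Complex.mul_re, Complex.neg_re, Complex.ofReal_re,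
      Complex.neg_im, Complex.ofReal_im, him] at h1
    have hre0 : (⟪w, w⟫ : ℂ).re = 0 := by nlinarith
    have hww : ⟪w, w⟫ = (0 : ℂ) := Complex.ext hre0 him
    rw [inner_self_eq_zero] at hww
    rw [hw, sub_eq_zero] at hww
    exact hww


/-- the pointwise identity behind `C'_Γ J_W = J_W C_Γ`:
for a conjugation `Γ` with `ΓW* = WΓ`, a unitary `U` with `ΓUΓ = U*`, and
`U' = -W + D_{W*}(I - UW*)⁻¹UD_W`, one has
`U' Γ (D_{W*}(I - UW*)⁻¹ x) = D_{W*}(I - UW*)⁻¹ U Γ x` for all `x`. -/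
theorem conjugation_crofoot_intertwining {d : ℕ} (W U DW DWs : Matrix (Fin d) (Fin d) ℂ)
    (Γ : EuclideanSpace ℂ (Fin d) →ₛₗ[starRingEnd ℂ] EuclideanSpace ℂ (Fin d))
    (hΓiso : ∀ x, ‖Γ x‖ = ‖x‖) (hΓinv : ∀ x, Γ (Γ x) = x)
    (hW : ‖W‖ < 1) (hU1 : Uᴴ * U = 1) (hU2 : U * Uᴴ = 1)
    (hDW : DW.PosSemidef) (hDW2 : DW ^ 2 = 1 - Wᴴ * W)
    (hDWs : DWs.PosSemidef) (hDWs2 : DWs ^ 2 = 1 - W * Wᴴ)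
    (hΓW : ∀ x, Γ (toEuclideanLin Wᴴ x) = toEuclideanLin W (Γ x))
    (hΓU : ∀ x, Γ (toEuclideanLin U x) = toEuclideanLin Uᴴ (Γ x)) :
    ∀ x, toEuclideanLin (-W + DWs * (1 - U * Wᴴ)⁻¹ * U * DW)
        (Γ (toEuclideanLin (DWs * (1 - U * Wᴴ)⁻¹) x)) =
      toEuclideanLin (DWs * (1 - U * Wᴴ)⁻¹ * U) (Γ x) := by
  classical
  haveI : CompleteSpace (Matrix (Fin d) (Fin d) ℂ) := FiniteDimensional.complete ℂ _
  set A : Matrix (Fin d) (Fin d) ℂ := 1 - U * Wᴴ with hAdef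
  set B : Matrix (Fin d) (Fin d) ℂ := 1 - Uᴴ * W with hBdef
  -- norms
  have hUW : ‖U * Wᴴ‖ = ‖W‖ := by
    have h1 : ‖(U * Wᴴ)ᴴ * (U * Wᴴ)‖ = ‖U * Wᴴ‖ * ‖U * Wᴴ‖ :=
      l2_opNorm_conjTranspose_mul_self _
    have h2 : (U * Wᴴ)ᴴ * (U * Wᴴ) = Wᴴᴴ * Wᴴ := by
      rw [conjTranspose_mul, conjTranspose_conjTranspose, mul_assoc, ← mul_assoc Uᴴ U Wᴴ,
        hU1, one_mul]
    have h3 : ‖Wᴴᴴ * Wᴴ‖ = ‖Wᴴ‖ * ‖Wᴴ‖ := l2_opNorm_conjTranspose_mul_self _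
    have h4 : ‖Wᴴ‖ = ‖W‖ := l2_opNorm_conjTranspose W
    rw [h2, h3, h4] at h1
    exact (mul_self_inj (norm_nonneg _) (norm_nonneg _)).mp h1.symm
  have hUW' : ‖Uᴴ * W‖ = ‖W‖ := by
    have h1 : ‖(Uᴴ * W)ᴴ * (Uᴴ * W)‖ = ‖Uᴴ * W‖ * ‖Uᴴ * W‖ :=
      l2_opNorm_conjTranspose_mul_self _
    have h2 : (Uᴴ * W)ᴴ * (Uᴴ * W) = Wᴴ * W := by
      rw [conjTranspose_mul, conjTranspose_conjTranspose, mul_assoc, ← mul_assoc U Uᴴ W,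
        hU2, one_mul]
    have h3 : ‖Wᴴ * W‖ = ‖W‖ * ‖W‖ := l2_opNorm_conjTranspose_mul_self _
    rw [h2, h3] at h1
    exact (mul_self_inj (norm_nonneg _) (norm_nonneg _)).mp h1.symm
  have hAunit : IsUnit A := by
    have := (Units.oneSub (U * Wᴴ) (by rw [hUW]; exact hW)).isUnit
    rwa [Units.val_oneSub] at this
  have hBunit : IsUnit B := by
    have := (Units.oneSub (Uᴴ * W) (by rw [hUW']; exact hW)).isUnit
    rwa [Units.val_oneSub] at this
  have hAdet : IsUnit A.det := (Matrix.isUnit_iff_isUnit_det A).mp hAunit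
  have hBdet : IsUnit B.det := (Matrix.isUnit_iff_isUnit_det B).mp hBunit
  have hAiA : A⁻¹ * A = 1 := Matrix.nonsing_inv_mul A hAdet
  have hAAi : A * A⁻¹ = 1 := Matrix.mul_nonsing_inv A hAdet
  have hBiB : B⁻¹ * B = 1 := Matrix.nonsing_inv_mul B hBdet
  have hBBi : B * B⁻¹ = 1 := Matrix.mul_nonsing_inv B hBdet
  -- reversed conjugation intertwinings
  have hΓW' : ∀ x, Γ (toEuclideanLin W x) = toEuclideanLin Wᴴ (Γ x) := by
    intro x
    have h := hΓW (Γ x)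
    rw [hΓinv] at h
    rw [← h, hΓinv]
  have hΓU' : ∀ x, Γ (toEuclideanLin Uᴴ x) = toEuclideanLin U (Γ x) := by
    intro x
    have h := hΓU (Γ x)
    rw [hΓinv] at h
    rw [← h, hΓinv]
  -- eigen data of DW
  set β := hDW.1.eigenvectorBasis with hβdef
  have hDWb : ∀ j, toEuclideanLin DW (β j) = ((hDW.1.eigenvalues j : ℝ) : ℂ) • β j := by
    intro j
    have h := hDW.1.mulVec_eigenvectorBasis j
    apply (WithLp.equiv 2 (Fin d → ℂ)).injective
    simp only [WithLp.equiv_apply, ofLp_toEuclideanLin_apply]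
    ext i
    have := congrFun h i
    simpa [Complex.real_smul] using this
  -- symmetry / positivity of DWs as an operator
  have hsymDWs : ∀ a b : EuclideanSpace ℂ (Fin d),
      ⟪toEuclideanLin DWs a, b⟫ = ⟪a, toEuclideanLin DWs b⟫ :=
    isHermitian_iff_isSymmetric.mp hDWs.1
  have hposDWs : ∀ a : EuclideanSpace ℂ (Fin d), (0 : ℂ) ≤ ⟪a, toEuclideanLin DWs a⟫ := by
    intro a
    have h := hDWs.dotProduct_mulVec_nonneg (WithLp.equiv 2 (Fin d → ℂ) a)
    simpa [EuclideanSpace.inner_eq_star_dotProduct, toEuclideanLin_apply, dotProduct_comm] using h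
  have hDWsq : DW * DW = 1 - Wᴴ * W := by rw [← pow_two]; exact hDW2
  have hDWssq : DWs * DWs = 1 - W * Wᴴ := by rw [← pow_two]; exact hDWs2
  -- fact 1 : DWs * W = W * DW
  have fact1 : DWs * W = W * DW := by
    apply Matrix.toEuclideanLin.injective
    apply Module.Basis.ext β.toBasis
    intro j
    have hμ := hDW.eigenvalues_nonneg j
    have h2 : toEuclideanLin DWs (toEuclideanLin DWs (toEuclideanLin W (β j)))
        = (((hDW.1.eigenvalues j : ℝ) : ℂ) ^ 2) • toEuclideanLin W (β j) := by
      rw [← tl_mul, ← tl_mul]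
      have hm : DWs * DWs * W = W * DW * DW := by
        rw [hDWssq, mul_assoc, hDWsq]
        noncomm_ring
      rw [hm, tl_mul, tl_mul, hDWb j, _root_.map_smul, _root_.map_smul, hDWb j,
        _root_.map_smul]
      rw [smul_smul, ← pow_two]
    have hkey := sqrt_eig (toEuclideanLin DWs) hsymDWs hposDWs
      (hDW.1.eigenvalues j) hμ (toEuclideanLin W (β j)) h2
    simp only [OrthonormalBasis.coe_toBasis]
    rw [tl_mul, tl_mul, hkey, hDWb j, _root_.map_smul]
  -- fact 2 : Γ ∘ DWs ∘ Γ = DW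
  have hck := conj_inner_key Γ hΓiso
  have hck2 : ∀ a b, ⟪Γ a, b⟫ = ⟪Γ b, a⟫ := by
    intro a b
    calc ⟪Γ a, b⟫ = ⟪Γ a, Γ (Γ b)⟫ := by rw [hΓinv]
      _ = ⟪Γ b, a⟫ := hck _ _
  let gl : EuclideanSpace ℂ (Fin d) →ₗ[ℂ] EuclideanSpace ℂ (Fin d) :=
    { toFun := fun x => Γ (toEuclideanLin DWs (Γ x))
      map_add' := by intro a b; simp
      map_smul' := by
        intro c a
        simp only [map_smulₛₗ, _root_.map_smul, RingHom.id_apply,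
          Complex.conj_conj, starRingEnd_apply, star_star] }
  have hglsym : ∀ a b, ⟪gl a, b⟫ = ⟪a, gl b⟫ := by
    intro a b
    show ⟪Γ (toEuclideanLin DWs (Γ a)), b⟫ = ⟪a, Γ (toEuclideanLin DWs (Γ b))⟫
    rw [hck2]
    rw [show (⟪a, Γ (toEuclideanLin DWs (Γ b))⟫ : ℂ)
        = ⟪Γ (Γ a), Γ (toEuclideanLin DWs (Γ b))⟫ by rw [hΓinv]]
    rw [hck]
    rw [hsymDWs]
  have hglpos : ∀ a, (0 : ℂ) ≤ ⟪a, gl a⟫ := by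
    intro a
    show (0 : ℂ) ≤ ⟪a, Γ (toEuclideanLin DWs (Γ a))⟫
    rw [show (⟪a, Γ (toEuclideanLin DWs (Γ a))⟫ : ℂ)
        = ⟪Γ (Γ a), Γ (toEuclideanLin DWs (Γ a))⟫ by rw [hΓinv]]
    rw [hck, hsymDWs]
    exact hposDWs (Γ a)
  have hgl2 : ∀ v, gl (gl v) = toEuclideanLin (DW * DW) v := by
    intro v
    show Γ (toEuclideanLin DWs (Γ (Γ (toEuclideanLin DWs (Γ v)))))
        = toEuclideanLin (DW * DW) v
    rw [hΓinv, ← tl_mul, hDWssq, hDWsq]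
    rw [tl_sub, tl_one, map_sub, hΓinv, tl_mul, hΓW', hΓW, hΓinv, ← tl_mul, tl_sub, tl_one]
  have fact2 : ∀ x, Γ (toEuclideanLin DWs (Γ x)) = toEuclideanLin DW x := by
    have : gl = toEuclideanLin DW := by
      apply Module.Basis.ext β.toBasis
      intro j
      have hμ := hDW.eigenvalues_nonneg j
      have h2 : gl (gl (β j)) = (((hDW.1.eigenvalues j : ℝ) : ℂ) ^ 2) • β j := by
        rw [hgl2, tl_mul, hDWb j, _root_.map_smul, hDWb j, smul_smul, ← pow_two]
      have hkey := sqrt_eig gl hglsym hglpos (hDW.1.eigenvalues j) hμ (β j) h2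
      simp only [OrthonormalBasis.coe_toBasis]
      rw [hkey, hDWb j]
    intro x
    exact congrFun (congrArg (fun f => f.toFun) this) x
  have fact2' : ∀ y, Γ (toEuclideanLin DWs y) = toEuclideanLin DW (Γ y) := by
    intro y
    have := fact2 (Γ y)
    rwa [hΓinv] at this
  -- Γ and A⁻¹
  have hΓA : ∀ y, Γ (toEuclideanLin A y) = toEuclideanLin B (Γ y) := by
    intro y
    rw [hAdef, hBdef, tl_sub, tl_one, map_sub, tl_mul, hΓU, hΓW, ← tl_mul, tl_sub, tl_one]
  have hΓAinv : ∀ x, Γ (toEuclideanLin A⁻¹ x) = toEuclideanLin B⁻¹ (Γ x) := by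
    intro x
    have h1 : toEuclideanLin A (toEuclideanLin A⁻¹ x) = x := by
      rw [← tl_mul, hAAi, tl_one]
    have h2 : Γ x = toEuclideanLin B (Γ (toEuclideanLin A⁻¹ x)) := by
      rw [← hΓA, h1]
    rw [h2, ← tl_mul, hBiB, tl_one]
  -- the matrix identity
  have M1 : (-W + DWs * A⁻¹ * U * DW) * (DW * B⁻¹) = DWs * A⁻¹ * U := by
    have hXD : (-W + DWs * A⁻¹ * U * DW) * DW = DWs * A⁻¹ * U * B := by
      have e2 : U * (1 - Wᴴ * W) = (U - W) + A * W := by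
        rw [hAdef]; noncomm_ring
      have e3 : DWs * A⁻¹ * U * B = DWs * A⁻¹ * (U - W) := by
        rw [hBdef, mul_assoc (DWs * A⁻¹) U (1 - Uᴴ * W)]
        have : U * (1 - Uᴴ * W) = U - W := by
          rw [mul_sub, mul_one, ← mul_assoc, hU2, one_mul]
        rw [this]
      have e4 : DWs * A⁻¹ * (A * W) = W * DW := by
        rw [← mul_assoc, mul_assoc DWs A⁻¹ A, hAiA, mul_one, fact1]
      rw [add_mul, neg_mul, mul_assoc (DWs * A⁻¹ * U) DW DW, hDWsq,
        mul_assoc (DWs * A⁻¹) U (1 - Wᴴ * W), e2, mul_add, e4, e3]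
      abel
    calc (-W + DWs * A⁻¹ * U * DW) * (DW * B⁻¹)
        = ((-W + DWs * A⁻¹ * U * DW) * DW) * B⁻¹ := (mul_assoc _ DW B⁻¹).symm
      _ = DWs * A⁻¹ * U * (B * B⁻¹) := by rw [hXD, mul_assoc]
      _ = DWs * A⁻¹ * U := by rw [hBBi, mul_one]
  -- assemble
  intro x
  have hstep : Γ (toEuclideanLin (DWs * A⁻¹) x) = toEuclideanLin (DW * B⁻¹) (Γ x) := by
    rw [tl_mul, fact2', hΓAinv, ← tl_mul]
  rw [hstep, ← tl_mul, M1]
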